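/- (SBA is Smith-consistent.) Let P be a budget proposal, V a vote profile, and ℓ a budget limit with cost(a) ≤ ℓ for every item a ∈ P. Let C₁, …, C_z be the ordered partition of P obtained by iteratively removing Schwartz sets from the majority graph of (P, V), and let B be any greedily pruned budget with respect to C₁, …, C_z and ℓ. Then B is feasible and for every feasible budget B' there is a weak domination path B ⊳⊳⊳ B'; consequently B is a Smith budget, and in particular if a Condorcet-winning budget exists then B equals it. -/

import Mathlib

open Classical

variable {α : Type*} [DecidableEq α]

/-- A vote `v : α → ℕ` ranks item `a` above item `b` iff `v a < v b`.
`v` prefers budget `B` over budget `B'` if `B \ B'` is nonempty and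
every item of `B \ B'` is ranked above every item of `B' \ B`. -/
def Prefers (v : α → ℕ) (B B' : Finset α) : Prop :=
  (B \ B').Nonempty ∧ ∀ a ∈ B \ B', ∀ b ∈ B' \ B, v a < v b

/-- The number of votes in the profile `V` that prefer `B` over `B'`. -/
noncomputable def domCount (V : List (α → ℕ)) (B B' : Finset α) : ℕ :=
  V.countP fun v => decide (Prefers v B B')

/-- `B` dominates `B'` if strictly more than half of the votes prefer `B` over `B'`. -/
def Dominates (V : List (α → ℕ)) (B B' : Finset α) : Prop :=
  2 * domCount V B B' > V.length

/-- `B` weakly dominates `B'` (written `B ⊳ B'`) if `B'` does not dominate `B`. -/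
def WeakDom (V : List (α → ℕ)) (B B' : Finset α) : Prop :=
  ¬ Dominates V B' B

/-- A budget `B` is feasible if it consists of proposed items and its total
cost is within the budget limit `ℓ`. -/
def Feasible (P : Finset α) (cost : α → ℕ) (ℓ : ℕ) (B : Finset α) : Prop :=
  B ⊆ P ∧ ∑ b ∈ B, cost b ≤ ℓ

/-- A Condorcet-winning budget is a feasible budget dominating every other
feasible budget. -/
def CondorcetWinning (P : Finset α) (cost : α → ℕ) (ℓ : ℕ)
    (V : List (α → ℕ)) (B : Finset α) : Prop :=
  Feasible P cost ℓ B ∧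
  ∀ B', Feasible P cost ℓ B' → B' ≠ B → Dominates V B B'

/-- Number of votes ranking `a` above `b`. -/
noncomputable def aboveCount (V : List (α → ℕ)) (a b : α) : ℕ :=
  V.countP fun v => decide (v a < v b)

/-- Arc `(a, b)` of the majority graph: a strict majority of the votes rank
`a` above `b`. -/
def MajArc (V : List (α → ℕ)) (a b : α) : Prop :=
  2 * aboveCount V a b > V.length

/-- Arc `(a, b)` of the weak majority graph: either the majority graph has the
arc `(a, b)`, or it has neither arc between `a` and `b`. -/
def WeakMajArc (V : List (α → ℕ)) (a b : α) : Prop :=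
  MajArc V a b ∨ (¬ MajArc V a b ∧ ¬ MajArc V b a)

/-- A weak majority path `a ⇝ b`: a directed path in the weak majority graph
on the vertex set `P`. -/
def WeakMajPath (P : Finset α) (V : List (α → ℕ)) (a b : α) : Prop :=
  Relation.ReflTransGen (fun x y => x ∈ P ∧ y ∈ P ∧ WeakMajArc V x y) a b

/-- A weak domination path `B ⊳⊳⊳ B'`: a finite sequence of feasible budgets
starting at `B` and ending at `B'`, each weakly dominating the next. -/
def WDPath (P : Finset α) (cost : α → ℕ) (ℓ : ℕ) (V : List (α → ℕ)) :
    Finset α → Finset α → Prop :=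
  Relation.ReflTransGen
    (fun B B' => Feasible P cost ℓ B ∧ Feasible P cost ℓ B' ∧ WeakDom V B B')

/-- A set `X` of feasible budgets is dominant if it is nonempty and every
budget in `X` dominates every feasible budget outside `X`. -/
def DominantSet (P : Finset α) (cost : α → ℕ) (ℓ : ℕ) (V : List (α → ℕ))
    (X : Set (Finset α)) : Prop :=
  X.Nonempty ∧ (∀ B ∈ X, Feasible P cost ℓ B) ∧
  ∀ B ∈ X, ∀ B', Feasible P cost ℓ B' → B' ∉ X → Dominates V B B'

/-- The Smith set of the budgets graph: a minimal dominant set of feasible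
budgets. -/
def IsSmithSet (P : Finset α) (cost : α → ℕ) (ℓ : ℕ) (V : List (α → ℕ))
    (X : Set (Finset α)) : Prop :=
  DominantSet P cost ℓ V X ∧
  ∀ Y, DominantSet P cost ℓ V Y → Y ⊆ X → Y = X

/-- `X` is a Schwartz component of the directed graph with arc relation `E`
restricted to the vertex set `S`: a minimal nonempty subset of `S` with no
arc entering it from outside. -/
def SchwartzComponent (S : Finset α) (E : α → α → Prop) (X : Finset α) : Prop :=
  X ⊆ S ∧ X.Nonempty ∧ (∀ b ∈ S, b ∉ X → ∀ a ∈ X, ¬ E b a) ∧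
  ∀ Y, Y ⊆ X → Y.Nonempty → (∀ b ∈ S, b ∉ Y → ∀ a ∈ Y, ¬ E b a) → Y = X

/-- `X` is the Schwartz set of the directed graph `E` restricted to the vertex
set `S`: the union of all Schwartz components. -/
def IsSchwartzSet (S : Finset α) (E : α → α → Prop) (X : Finset α) : Prop :=
  ∀ a, a ∈ X ↔ ∃ Y, SchwartzComponent S E Y ∧ a ∈ Y

/-- The union of the first `i` components of an ordered partition. -/
def unionUpTo (Cs : List (Finset α)) (i : ℕ) : Finset α :=
  (Cs.take i).foldr (· ∪ ·) ∅

/-- `B` is greedily pruned with respect to the ordered partition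
`C₁, …, C_z` (given as a list `Cs`) and the budget limit `ℓ`: `B` consists of
items of the partition and, for each `i`, `B ∩ C_i` is a maximal subset `S` of
`C_i` such that the cost of `(B ∩ (C₁ ∪ … ∪ C_{i-1})) ∪ S` is at most `ℓ`. -/
def GreedilyPruned (cost : α → ℕ) (ℓ : ℕ) (Cs : List (Finset α))
    (B : Finset α) : Prop :=
  B ⊆ unionUpTo Cs Cs.length ∧
  ∀ i (hi : i < Cs.length),
    (∑ x ∈ (B ∩ unionUpTo Cs i) ∪ (B ∩ Cs.get ⟨i, hi⟩), cost x) ≤ ℓ ∧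
    ∀ S ⊆ Cs.get ⟨i, hi⟩, B ∩ Cs.get ⟨i, hi⟩ ⊆ S →
      (∑ x ∈ (B ∩ unionUpTo Cs i) ∪ S, cost x) ≤ ℓ → S = B ∩ Cs.get ⟨i, hi⟩

/-- The arc relation of the majority graph of `(P, V)`. -/
def MajE (P : Finset α) (V : List (α → ℕ)) (a b : α) : Prop :=
  a ∈ P ∧ b ∈ P ∧ MajArc V a b


/-!
Let `B'` be feasible with `B' ⊄ B`, and pick `a ∈ B' \ B`, say `a ∈ C_k`. By maximality of
`B ∩ C_k`, adding `a` to `B ∩ (C₁ ∪ … ∪ C_k)` exceeds the limit, so `B'` cannot contain all of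
`B ∩ (C₁ ∪ … ∪ C_k)`: some `b ∈ B \ B'` lies in a component `C_j` with `j ≤ k`. Inside a
Schwartz component every item reaches every other along majority arcs, and nothing outside a
Schwartz set beats an item inside it, so the weak majority graph has a path from `b` to `a`.
Leaving `B'ᶜ` along this path for the first time, from `c ∉ B'` to `d ∈ B'`, gives
`B ⊳ {b} ⊳⊳⊳ {c} ⊳ B'`; the singletons are feasible because every item costs at most `ℓ`.
The feasible budgets with a weak domination path to every feasible budget then form the Smith set.
-/

open Relation Finset

theorem List.countP_add_countP_le_length {β : Type*} {l : List β} {p q : β → Bool}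
    (h : ∀ x ∈ l, p x → ¬ q x) : l.countP p + l.countP q ≤ l.length := by
  rw [l.length_eq_countP_add_countP p]
  gcongr
  exact List.countP_mono_left fun x hx hq => by simpa using fun hp => h x hx hp hq

theorem Relation.ReflTransGen.exists_exit {β : Type*} {r : β → β → Prop} {s : Set β} {a b : β}
    (h : ReflTransGen r a b) (ha : a ∉ s) (hb : b ∈ s) :
    ∃ c d, ReflTransGen r a c ∧ c ∉ s ∧ r c d ∧ d ∈ s := by
  induction h using ReflTransGen.head_induction_on with
  | refl => exact absurd hb ha
  | @head x y hxy _ ih =>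
    by_cases hy : y ∈ s
    · exact ⟨x, y, .refl, ha, hxy, hy⟩
    · obtain ⟨c, d, hyc, hc, hcd, hd⟩ := ih hy
      exact ⟨c, d, hyc.head hxy, hc, hcd, hd⟩

theorem feasible_singleton {β : Type*} {P : Finset β} {cost : β → ℕ} {ℓ : ℕ}
    (hcost : ∀ a ∈ P, cost a ≤ ℓ) {a : β} (ha : a ∈ P) : Feasible P cost ℓ {a} :=
  ⟨singleton_subset_iff.2 ha, by simpa using hcost a ha⟩

section MajorityGraph

variable {β : Type*} {P : Finset β} {V : List (β → ℕ)} {a b : β}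

theorem MajArc.not_majArc (h : MajArc V a b) : ¬ MajArc V b a := by
  have : aboveCount V a b + aboveCount V b a ≤ V.length :=
    List.countP_add_countP_le_length fun v _ hab hba => by
      simp only [decide_eq_true_eq] at hab hba; omega
  unfold MajArc at h ⊢
  omega

theorem weakMajArc_iff_not_majArc : WeakMajArc V a b ↔ ¬ MajArc V b a := by
  unfold WeakMajArc
  constructor
  · rintro (h | h)
    exacts [h.not_majArc, h.2]
  · intro h
    by_cases hab : MajArc V a b
    exacts [.inl hab, .inr ⟨hab, h⟩]

theorem SchwartzComponent.reflTransGen {S X : Finset β} {E : β → β → Prop}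
    (hX : SchwartzComponent S E X) (hb : b ∈ X) (ha : a ∈ X) : ReflTransGen E b a := by
  let Y := X.filter (ReflTransGen E · a)
  have hYX : Y ⊆ X := filter_subset _ _
  have hclosed : ∀ c ∈ S, c ∉ Y → ∀ x ∈ Y, ¬ E c x := by
    intro c hcS hcY x hxY hcx
    by_cases hcX : c ∈ X
    · exact hcY (mem_filter.2 ⟨hcX, (mem_filter.1 hxY).2.head hcx⟩)
    · exact hX.2.2.1 c hcS hcX x (hYX hxY) hcx
  have hYeq : Y = X := hX.2.2.2 Y hYX ⟨a, mem_filter.2 ⟨ha, .refl⟩⟩ hclosed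
  have hbY : b ∈ Y := hYeq ▸ hb
  exact (mem_filter.1 hbY).2

end MajorityGraph

section Domination

variable {V : List (α → ℕ)} {X Y : Finset α}

theorem weakDom_of_subset (h : Y ⊆ X) : WeakDom V X Y := by
  have : domCount V Y X = 0 := List.countP_eq_zero.2 fun v _ hv => by
    simp only [decide_eq_true_eq] at hv
    exact hv.1.ne_empty (sdiff_eq_empty_iff_subset.2 h)
  unfold WeakDom Dominates
  omega

theorem weakDom_of_weakMajArc {a b : α} (hb : b ∈ X \ Y) (ha : a ∈ Y \ X)
    (h : WeakMajArc V b a) : WeakDom V X Y := by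
  have : domCount V Y X ≤ aboveCount V a b := List.countP_mono_left fun v _ hv => by
    simp only [decide_eq_true_eq] at hv ⊢
    exact hv.2 a ha b hb
  have hab : ¬ MajArc V a b := weakMajArc_iff_not_majArc.1 h
  unfold WeakDom Dominates
  unfold MajArc at hab
  omega

theorem weakDom_singleton {a b : α} (h : WeakMajArc V a b) : WeakDom V {a} {b} := by
  by_cases hab : a = b
  · exact weakDom_of_subset (by rw [hab])
  · exact weakDom_of_weakMajArc (by simp [hab]) (by simp [Ne.symm hab]) h

end Domination

section BudgetGraph

variable {P : Finset α} {cost : α → ℕ} {ℓ : ℕ} {V : List (α → ℕ)}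

theorem WeakMajPath.wdPath_singleton (hcost : ∀ a ∈ P, cost a ≤ ℓ) {a b : α}
    (h : WeakMajPath P V a b) : WDPath P cost ℓ V {a} {b} :=
  ReflTransGen.lift singleton (fun _ _ hxy => ⟨feasible_singleton hcost hxy.1,
    feasible_singleton hcost hxy.2.1, weakDom_singleton hxy.2.2⟩) _ _ h

theorem DominantSet.mem_of_wdPath {D : Set (Finset α)} (hD : DominantSet P cost ℓ V D)
    {B B' : Finset α} (h : WDPath P cost ℓ V B B') (hB' : B' ∈ D) : B ∈ D := by
  induction h using ReflTransGen.head_induction_on with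
  | refl => exact hB'
  | @head B₁ B₂ hstep _ ih =>
    by_contra hB₁
    exact hstep.2.2 (hD.2.2 B₂ ih B₁ hstep.1 hB₁)

theorem CondorcetWinning.dominantSet {B : Finset α} (h : CondorcetWinning P cost ℓ V B) :
    DominantSet P cost ℓ V {B} := by
  refine ⟨Set.singleton_nonempty B, ?_, ?_⟩ <;> rintro _ rfl
  exacts [h.1, h.2]

theorem isSmithSet_of_forall_wdPath {B : Finset α} (hB : Feasible P cost ℓ B)
    (hpaths : ∀ B', Feasible P cost ℓ B' → WDPath P cost ℓ V B B') :
    IsSmithSet P cost ℓ V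
      {B₁ | Feasible P cost ℓ B₁ ∧ ∀ B', Feasible P cost ℓ B' → WDPath P cost ℓ V B₁ B'} := by
  have hdom : DominantSet P cost ℓ V
      {B₁ | Feasible P cost ℓ B₁ ∧ ∀ B', Feasible P cost ℓ B' → WDPath P cost ℓ V B₁ B'} := by
    refine ⟨⟨B, hB, hpaths⟩, fun _ h => h.1, fun B₁ hB₁ B₂ hB₂ hB₂X => ?_⟩
    by_contra hnot
    exact hB₂X ⟨hB₂, fun B' hB' => .head ⟨hB₂, hB₁.1, hnot⟩ (hB₁.2 B' hB')⟩
  refine ⟨hdom, fun Y hY hYX => hYX.antisymm fun B₁ hB₁ => ?_⟩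
  obtain ⟨B₂, hB₂⟩ := hY.1
  exact hY.mem_of_wdPath (hB₁.2 B₂ (hY.2.1 B₂ hB₂)) hB₂

end BudgetGraph

section Partition

variable {Cs : List (Finset α)} {i j k : ℕ}

theorem mem_unionUpTo {x : α} :
    x ∈ unionUpTo Cs i ↔ ∃ j, ∃ hj : j < Cs.length, j < i ∧ x ∈ Cs.get ⟨j, hj⟩ := by
  have foldr_union : ∀ l : List (Finset α), x ∈ l.foldr (· ∪ ·) ∅ ↔ ∃ s ∈ l, x ∈ s := by
    intro l; induction l <;> simp_all
  simp only [unionUpTo, foldr_union, List.mem_take_iff_getElem]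
  constructor
  · rintro ⟨_, ⟨j, hj, rfl⟩, hx⟩
    exact ⟨j, by omega, by omega, hx⟩
  · rintro ⟨j, hj, hji, hx⟩
    exact ⟨_, ⟨j, by omega, rfl⟩, hx⟩

theorem unionUpTo_zero : unionUpTo Cs 0 = ∅ := rfl

theorem unionUpTo_succ (hi : i < Cs.length) :
    unionUpTo Cs (i + 1) = unionUpTo Cs i ∪ Cs.get ⟨i, hi⟩ := by
  ext x
  simp only [mem_union, mem_unionUpTo]
  constructor
  · rintro ⟨j, hj, hji, hx⟩
    rcases Nat.lt_succ_iff_lt_or_eq.1 hji with hji | rfl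
    exacts [.inl ⟨j, hj, hji, hx⟩, .inr hx]
  · rintro (⟨j, hj, hji, hx⟩ | hx)
    exacts [⟨j, hj, hji.trans i.lt_succ_self, hx⟩, ⟨i, hi, i.lt_succ_self, hx⟩]

theorem unionUpTo_mono (h : i ≤ j) : unionUpTo Cs i ⊆ unionUpTo Cs j := fun x hx => by
  obtain ⟨l, hl, hli, hx⟩ := mem_unionUpTo.1 hx
  exact mem_unionUpTo.2 ⟨l, hl, hli.trans_le h, hx⟩

end Partition

def IsSchwartzDecomposition (P : Finset α) (V : List (α → ℕ)) (Cs : List (Finset α)) : Prop :=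
  ∀ i (hi : i < Cs.length), IsSchwartzSet (P \ unionUpTo Cs i) (MajE P V) (Cs.get ⟨i, hi⟩)

namespace IsSchwartzDecomposition

variable {P : Finset α} {V : List (α → ℕ)} {Cs : List (Finset α)} {j k : ℕ}

theorem mem_sdiff_unionUpTo (h : IsSchwartzDecomposition P V Cs) (hk : k < Cs.length)
    (hjk : j ≤ k) {a : α} (ha : a ∈ Cs.get ⟨k, hk⟩) : a ∈ P \ unionUpTo Cs j := by
  obtain ⟨Y, hY, haY⟩ := (h k hk a).1 ha
  have ha' := mem_sdiff.1 (hY.1 haY)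
  exact mem_sdiff.2 ⟨ha'.1, fun haj => ha'.2 (unionUpTo_mono hjk haj)⟩

theorem weakMajPath (h : IsSchwartzDecomposition P V Cs) (hj : j < Cs.length)
    (hk : k < Cs.length) (hjk : j ≤ k) {a b : α} (hb : b ∈ Cs.get ⟨j, hj⟩)
    (ha : a ∈ Cs.get ⟨k, hk⟩) : WeakMajPath P V b a := by
  obtain ⟨Y, hY, hbY⟩ := (h j hj b).1 hb
  have haS := h.mem_sdiff_unionUpTo hk hjk ha
  have haP := (mem_sdiff.1 haS).1
  have hbP := (mem_sdiff.1 (h.mem_sdiff_unionUpTo hj le_rfl hb)).1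
  by_cases haY : a ∈ Y
  · exact ReflTransGen.mono (fun x y hxy => ⟨hxy.1, hxy.2.1, .inl hxy.2.2⟩) b a
      (hY.reflTransGen hbY haY)
  · refine .single ⟨hbP, haP, weakMajArc_iff_not_majArc.2 fun hab => ?_⟩
    exact hY.2.2.1 a haS haY b hbY ⟨haP, hbP, hab⟩

end IsSchwartzDecomposition

namespace GreedilyPruned

variable {cost : α → ℕ} {ℓ : ℕ} {Cs : List (Finset α)} {B : Finset α}

theorem sum_inter_unionUpTo_le (h : GreedilyPruned cost ℓ Cs B) {i : ℕ} (hi : i ≤ Cs.length) :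
    ∑ x ∈ B ∩ unionUpTo Cs i, cost x ≤ ℓ := by
  cases i with
  | zero => simp [unionUpTo_zero]
  | succ i =>
    rw [unionUpTo_succ hi, inter_union_distrib_left]
    exact (h.2 i hi).1

theorem feasible {P : Finset α} (h : GreedilyPruned cost ℓ Cs B)
    (hcover : unionUpTo Cs Cs.length = P) : Feasible P cost ℓ B := by
  refine ⟨hcover ▸ h.1, ?_⟩
  simpa [inter_eq_left.2 h.1] using h.sum_inter_unionUpTo_le le_rfl

theorem exists_mem_sdiff (h : GreedilyPruned cost ℓ Cs B) {B' : Finset α}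
    (hB' : ∑ x ∈ B', cost x ≤ ℓ) {k : ℕ} (hk : k < Cs.length) {a : α}
    (hak : a ∈ Cs.get ⟨k, hk⟩) (haB' : a ∈ B') (haB : a ∉ B) :
    ∃ j, ∃ hj : j < Cs.length, j ≤ k ∧ ∃ b ∈ Cs.get ⟨j, hj⟩, b ∈ B ∧ b ∉ B' := by
  have hgrow : insert a (B ∩ Cs.get ⟨k, hk⟩) ≠ B ∩ Cs.get ⟨k, hk⟩ :=
    insert_ne_self.2 fun ha => haB (mem_inter.1 ha).1
  have hover : ¬ ∑ x ∈ B ∩ unionUpTo Cs k ∪ insert a (B ∩ Cs.get ⟨k, hk⟩), cost x ≤ ℓ :=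
    fun hle => hgrow ((h.2 k hk).2 _ (insert_subset hak inter_subset_right)
      (subset_insert _ _) hle)
  obtain ⟨b, hb, hbB'⟩ : ∃ b ∈ B ∩ unionUpTo Cs k ∪ insert a (B ∩ Cs.get ⟨k, hk⟩), b ∉ B' := by
    by_contra! hsub
    exact hover ((sum_le_sum_of_subset hsub).trans hB')
  simp only [mem_union, mem_inter, mem_insert] at hb
  rcases hb with ⟨hbB, hbk⟩ | rfl | ⟨hbB, hbk⟩
  · obtain ⟨j, hj, hjk, hbj⟩ := mem_unionUpTo.1 hbk
    exact ⟨j, hj, hjk.le, b, hbj, hbB, hbB'⟩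
  · exact absurd haB' hbB'
  · exact ⟨k, hk, le_rfl, b, hbk, hbB, hbB'⟩

end GreedilyPruned

theorem wdPath_of_greedilyPruned {P : Finset α} {cost : α → ℕ} {ℓ : ℕ} {V : List (α → ℕ)}
    {Cs : List (Finset α)} {B B' : Finset α} (hcost : ∀ a ∈ P, cost a ≤ ℓ)
    (hschwartz : IsSchwartzDecomposition P V Cs) (hcover : unionUpTo Cs Cs.length = P)
    (hgreedy : GreedilyPruned cost ℓ Cs B) (hB' : Feasible P cost ℓ B') :
    WDPath P cost ℓ V B B' := by
  have hB := hgreedy.feasible hcover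
  by_cases hsub : B' ⊆ B
  · exact .single ⟨hB, hB', weakDom_of_subset hsub⟩
  obtain ⟨a, haB', haB⟩ := not_subset.1 hsub
  obtain ⟨k, hk, -, hak⟩ := mem_unionUpTo.1 (hcover ▸ hB'.1 haB' : a ∈ unionUpTo Cs Cs.length)
  obtain ⟨j, hj, hjk, b, hbj, hbB, hbB'⟩ := hgreedy.exists_mem_sdiff hB'.2 hk hak haB' haB
  obtain ⟨c, d, hbc, hcB', hcd, hdB'⟩ :=
    (hschwartz.weakMajPath hj hk hjk hbj hak).exists_exit (s := ↑B') hbB' haB'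
  have hdc : d ≠ c := fun hdc => hcB' (hdc ▸ hdB')
  have hBb : WDPath P cost ℓ V B {b} :=
    .single ⟨hB, feasible_singleton hcost (hB.1 hbB), weakDom_of_subset (by simpa using hbB)⟩
  have hcB : WDPath P cost ℓ V {c} B' :=
    .single ⟨feasible_singleton hcost hcd.1, hB',
      weakDom_of_weakMajArc (by simpa using hcB') (by simpa [hdc] using hdB') hcd.2.2⟩
  exact hBb.trans ((WeakMajPath.wdPath_singleton hcost hbc).trans hcB)

theorem sba_is_smith_consistent_general (P : Finset α) (cost : α → ℕ) (ℓ : ℕ)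
    (V : List (α → ℕ))
    (hcost : ∀ a ∈ P, cost a ≤ ℓ)
    (Cs : List (Finset α))
    (hschwartz : ∀ i (hi : i < Cs.length),
      IsSchwartzSet (P \ unionUpTo Cs i) (MajE P V) (Cs.get ⟨i, hi⟩))
    (hcover : unionUpTo Cs Cs.length = P)
    (B : Finset α) (hgreedy : GreedilyPruned cost ℓ Cs B) :
    Feasible P cost ℓ B ∧
    (∀ B', Feasible P cost ℓ B' → WDPath P cost ℓ V B B') ∧
    (∃ X, IsSmithSet P cost ℓ V X ∧ B ∈ X) ∧
    (∀ Bstar, CondorcetWinning P cost ℓ V Bstar → B = Bstar) := by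
  have hB : Feasible P cost ℓ B := hgreedy.feasible hcover
  have hpaths : ∀ B', Feasible P cost ℓ B' → WDPath P cost ℓ V B B' :=
    fun _ hB' => wdPath_of_greedilyPruned hcost hschwartz hcover hgreedy hB'
  refine ⟨hB, hpaths, ⟨_, isSmithSet_of_forall_wdPath hB hpaths, hB, hpaths⟩, ?_⟩
  exact fun Bstar hC => hC.dominantSet.mem_of_wdPath (hpaths Bstar hC.1) rfl

/-- SBA is Smith-consistent: if `C₁, …, C_z` is the ordered
partition of `P` obtained by iteratively removing Schwartz sets from the
majority graph of `(P, V)`, every item fits within the budget limit, and `B`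
is a greedily pruned budget w.r.t. `C₁, …, C_z` and `ℓ`, then `B` is feasible,
has a weak domination path to every feasible budget, is a Smith budget, and
equals the Condorcet-winning budget whenever one exists. -/
theorem sba_is_smith_consistent (P : Finset α) (cost : α → ℕ) (ℓ : ℕ)
    (V : List (α → ℕ)) (hV : ∀ v ∈ V, Set.InjOn v ↑P)
    (hcost : ∀ a ∈ P, cost a ≤ ℓ)
    (Cs : List (Finset α))
    (hschwartz : ∀ i (hi : i < Cs.length),
      IsSchwartzSet (P \ unionUpTo Cs i) (MajE P V) (Cs.get ⟨i, hi⟩))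
    (hcover : unionUpTo Cs Cs.length = P)
    (B : Finset α) (hgreedy : GreedilyPruned cost ℓ Cs B) :
    Feasible P cost ℓ B ∧
    (∀ B', Feasible P cost ℓ B' → WDPath P cost ℓ V B B') ∧
    (∃ X, IsSmithSet P cost ℓ V X ∧ B ∈ X) ∧
    (∀ Bstar, CondorcetWinning P cost ℓ V Bstar → B = Bstar) :=
  sba_is_smith_consistent_general P cost ℓ V hcost Cs hschwartz hcover B hgreedy
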